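/- In a local Moufang set with Hua maps h_x := τ μ_x for units x (where τ is a fixed μ-map), the following identities hold for all units x, y: (1) μ_{x h_y} = h_y^{-1} μ_x h_y; (2) h_{xτ} = τ^{-1} h_{-x} τ; (3) h_{x h_y} = h_{-y} h_{xτ}^{-1} h_y. -/

import Mathlib

/-!
Every μ-map lies in the little projective group `G`, so by (LM3) conjugating the double coset
`U_0 α_x U_0` by `φ ∈ G` gives again a μ-map: of `xφ` if `φ` fixes `0` and `∞`, and of `(-x)φ`
if `φ` swaps them. Together with the uniqueness of μ-maps and `μ_{-x} = μ_x⁻¹` this yields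
`μ_{x h_y} = μ_x^{h_y}`, `μ_{xτ} = μ_{-x}^τ = (μ_x⁻¹)^τ` and `μ_{-y} = μ_y⁻¹`, from which the
three identities follow by computing in the group.
-/

open Equiv

structure LocalMoufangSet (X : Type*) where
  r : X → X → Prop
  requiv : Equivalence r
  U : X → Subgroup (Equiv.Perm X)
  preserves : ∀ x : X, ∀ u ∈ U x, ∀ a b : X, r a b ↔ r (u a) (u b)
  big : ∃ a b c : X, ¬ r a b ∧ ¬ r b c ∧ ¬ r a c
  lm1 : ∀ x y : X, r x y → ∀ u ∈ U x, ∃ v ∈ U y, ∀ z : X, r (u z) (v z)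
  lm2_fix : ∀ x : X, ∀ u ∈ U x, u x = x
  lm2_trans : ∀ x y z : X, ¬ r y x → ¬ r z x → ∃! u : Equiv.Perm X, u ∈ U x ∧ u y = z
  lm2'_trans : ∀ x y z : X, ¬ r y x → ¬ r z x → ∃ u ∈ U x, r (u y) z
  lm2'_free : ∀ x : X, ∀ u ∈ U x, ∀ y : X, ¬ r y x → r (u y) y → ∀ z : X, r (u z) z
  lm3 : ∀ x : X, ∀ g ∈ (⨆ y : X, U y : Subgroup (Equiv.Perm X)),
      (U x).map (MulAut.conj g).toMonoidHom = U (g x)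

namespace LocalMoufangSet

variable {X : Type*} (M : LocalMoufangSet X)

/-- The little projective group. -/
def G : Subgroup (Equiv.Perm X) := ⨆ x : X, M.U x

/-- `x` is a unit with respect to the base points `o` (zero) and `ι` (infinity). -/
def IsUnitPt (o ι x : X) : Prop := ¬ M.r x o ∧ ¬ M.r x ι

/-- `μ` is the μ-map of `x`: it lies in the double coset `U_0 α_x U_0` and swaps `o` and `ι`.
(We use the left-action convention: a right product `g α h` corresponds to `h * α * g`.) -/
def IsMuMap (o ι x : X) (μ : Equiv.Perm X) : Prop :=
  μ o = ι ∧ μ ι = o ∧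
    ∃ a ∈ M.U ι, a o = x ∧ ∃ g ∈ M.U o, ∃ h ∈ M.U o, μ = h * a * g

/-- Specialness with respect to a μ-map `τ`: `(-x)τ = -(xτ)` for all units `x`. -/
def Special (o ι : X) (τ : Equiv.Perm X) : Prop :=
  ∀ z : X, IsUnitPt M o ι z → ∀ a ∈ M.U ι, a o = z → ∀ b ∈ M.U ι, b o = τ z →
    τ (a⁻¹ o) = b⁻¹ o

end LocalMoufangSet

namespace LocalMoufangSet

variable {X : Type*} (M : LocalMoufangSet X)

lemma mem_G_of_mem_U {p : X} {u : Perm X} (hu : u ∈ M.U p) : u ∈ M.G :=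
  le_iSup M.U p hu

lemma conj_mem_U {g : Perm X} (hg : g ∈ M.G) {p : X} {u : Perm X} (hu : u ∈ M.U p) :
    g * u * g⁻¹ ∈ M.U (g p) := by
  rw [← M.lm3 p g hg]
  exact Subgroup.mem_map.mpr ⟨u, hu, rfl⟩

lemma r_apply_iff_of_mem_U {p : X} {u : Perm X} (hu : u ∈ M.U p) (a : X) :
    M.r (u a) p ↔ M.r a p := by
  conv_lhs => rw [← M.lm2_fix p u hu]
  exact (M.preserves p u hu a p).symm

lemma eq_of_mem_U_of_apply_eq {p a : X} (ha : ¬ M.r a p) {u v : Perm X}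
    (hu : u ∈ M.U p) (hv : v ∈ M.U p) (huv : u a = v a) : u = v := by
  have hb : ¬ M.r (u a) p := (M.r_apply_iff_of_mem_U hu a).not.mpr ha
  obtain ⟨w, -, hw⟩ := M.lm2_trans p a (u a) ha hb
  rw [hw u ⟨hu, rfl⟩, hw v ⟨hv, huv.symm⟩]

variable {M} {o ι : X}

lemma IsMuMap.mem_G {x : X} {μ : Perm X} (hμ : M.IsMuMap o ι x μ) : μ ∈ M.G := by
  obtain ⟨-, -, a, haU, -, g, hgU, h, hhU, rfl⟩ := hμ
  exact mul_mem (mul_mem (M.mem_G_of_mem_U hhU) (M.mem_G_of_mem_U haU)) (M.mem_G_of_mem_U hgU)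

lemma IsMuMap.exists_eq_mul_mul (h0 : ¬ M.r o ι) {x : X} {μ β : Perm X}
    (hμ : M.IsMuMap o ι x μ) (hβU : β ∈ M.U ι) (hβo : β o = x) :
    ∃ h ∈ M.U o, ∃ g ∈ M.U o, μ = h * β * g ∧ h x = ι ∧ g ι = β⁻¹ o := by
  obtain ⟨hμo, hμι, a, haU, hao, g, hgU, h, hhU, rfl⟩ := hμ
  have hab : a = β := M.eq_of_mem_U_of_apply_eq h0 haU hβU (hao.trans hβo.symm)
  subst hab
  have hho := M.lm2_fix o h hhU
  have hgo := M.lm2_fix o g hgU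
  refine ⟨h, hhU, g, hgU, rfl, ?_, ?_⟩
  · simpa only [Perm.mul_apply, hgo, hao] using hμo
  · rw [Perm.eq_inv_iff_eq]
    apply h.injective
    simpa only [Perm.mul_apply, hho] using hμι

lemma IsMuMap.unique (h0 : ¬ M.r o ι) {x : X} {μ₁ μ₂ : Perm X}
    (h₁ : M.IsMuMap o ι x μ₁) (h₂ : M.IsMuMap o ι x μ₂) : μ₁ = μ₂ := by
  have hι0 : ¬ M.r ι o := fun h => h0 (M.requiv.symm h)
  obtain ⟨a, haU, hao, -⟩ := h₁.2.2
  obtain ⟨h, hhU, g, hgU, rfl, hhx, hgι⟩ := h₁.exists_eq_mul_mul h0 haU hao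
  obtain ⟨h', hhU', g', hgU', rfl, hhx', hgι'⟩ := h₂.exists_eq_mul_mul h0 haU hao
  have hxo : ¬ M.r x o := fun hx => hι0 (by rwa [← hhx, M.r_apply_iff_of_mem_U hhU])
  rw [M.eq_of_mem_U_of_apply_eq hxo hhU hhU' (hhx.trans hhx'.symm),
    M.eq_of_mem_U_of_apply_eq hι0 hgU hgU' (hgι.trans hgι'.symm)]

lemma IsMuMap.inv (h0 : ¬ M.r o ι) {x : X} {μ β : Perm X} (hμ : M.IsMuMap o ι x μ)
    (hβU : β ∈ M.U ι) (hβo : β o = x) : M.IsMuMap o ι (β⁻¹ o) μ⁻¹ := by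
  obtain ⟨h, hhU, g, hgU, rfl, -, -⟩ := hμ.exists_eq_mul_mul h0 hβU hβo
  refine ⟨?_, ?_, β⁻¹, inv_mem hβU, rfl, h⁻¹, inv_mem hhU, g⁻¹, inv_mem hgU, by group⟩
  · rw [Perm.inv_eq_iff_eq, hμ.2.1]
  · rw [Perm.inv_eq_iff_eq, hμ.1]

lemma IsMuMap.conj_of_fix {x : X} {μ φ : Perm X} (hμ : M.IsMuMap o ι x μ)
    (hφG : φ ∈ M.G) (hφo : φ o = o) (hφι : φ ι = ι) :
    M.IsMuMap o ι (φ x) (φ * μ * φ⁻¹) := by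
  obtain ⟨hμo, hμι, a, haU, hao, g, hgU, h, hhU, rfl⟩ := hμ
  have hφo' : φ⁻¹ o = o := by rw [Perm.inv_eq_iff_eq, hφo]
  have hφι' : φ⁻¹ ι = ι := by rw [Perm.inv_eq_iff_eq, hφι]
  refine ⟨?_, ?_, φ * a * φ⁻¹, ?_, ?_, φ * g * φ⁻¹, ?_, φ * h * φ⁻¹, ?_, by group⟩
  · simp only [Perm.mul_apply, hφo', hμo, hφι]
  · simp only [Perm.mul_apply, hφι', hμι, hφo]
  · simpa only [hφι] using M.conj_mem_U hφG haU
  · simp only [Perm.mul_apply, hφo', hao]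
  · simpa only [hφo] using M.conj_mem_U hφG hgU
  · simpa only [hφo] using M.conj_mem_U hφG hhU

lemma IsMuMap.conj_of_swap (h0 : ¬ M.r o ι) {x : X} {μ φ β : Perm X}
    (hμ : M.IsMuMap o ι x μ) (hβU : β ∈ M.U ι) (hβo : β o = x)
    (hφG : φ ∈ M.G) (hφo : φ o = ι) (hφι : φ ι = o) :
    M.IsMuMap o ι (φ (β⁻¹ o)) (φ * μ * φ⁻¹) := by
  obtain ⟨h, hhU, g, hgU, hμ_eq, -, hgι⟩ := hμ.exists_eq_mul_mul h0 hβU hβo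
  have hφo' : φ⁻¹ o = ι := by rw [Perm.inv_eq_iff_eq, hφι]
  have hφι' : φ⁻¹ ι = o := by rw [Perm.inv_eq_iff_eq, hφo]
  -- `μ = β g u` with `u := (β g)⁻¹ h (β g) ∈ U_{ι (β g)⁻¹} = U_ι`.
  set u := (β * g)⁻¹ * h * (β * g)⁻¹⁻¹ with hu
  have hβg : (β * g)⁻¹ o = ι := by
    rw [Perm.inv_eq_iff_eq, Perm.mul_apply, hgι]; exact (β.apply_symm_apply o).symm
  have huU : u ∈ M.U ι := by
    simpa only [hβg] using M.conj_mem_U (inv_mem (mul_mem (M.mem_G_of_mem_U hβU)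
      (M.mem_G_of_mem_U hgU))) hhU
  have hμ_eq' : μ = β * g * u := by rw [hμ_eq, hu]; group
  refine ⟨?_, ?_, φ * g * φ⁻¹, ?_, ?_, φ * u * φ⁻¹, ?_, φ * β * φ⁻¹, ?_, ?_⟩
  · simp only [Perm.mul_apply, hφo', hμ.2.1, hφo]
  · simp only [Perm.mul_apply, hφι', hμ.1, hφι]
  · simpa only [hφo] using M.conj_mem_U hφG hgU
  · simp only [Perm.mul_apply, hφo', hgι]
  · simpa only [hφι] using M.conj_mem_U hφG huU
  · simpa only [hφι] using M.conj_mem_U hφG hβU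
  · rw [hμ_eq']; group

end LocalMoufangSet

theorem stmt6_general {X : Type*} (M : LocalMoufangSet X) (o ι : X) (h0 : ¬ M.r o ι)
    (e : X)
    (τ : Equiv.Perm X) (hτ : M.IsMuMap o ι e τ)
    (x : X)
    (α : Equiv.Perm X) (hαU : α ∈ M.U ι) (hαo : α o = x)
    (y : X)
    (αy : Equiv.Perm X) (hαyU : αy ∈ M.U ι) (hαyo : αy o = y)
    (μx μy : Equiv.Perm X)
    (hμx : M.IsMuMap o ι x μx) (hμy : M.IsMuMap o ι y μy) :
    -- (1) μ_{x h_y} = μ_x^{h_y}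
    (∀ μ : Equiv.Perm X, M.IsMuMap o ι ((μy * τ) x) μ →
      μ = (μy * τ) * μx * (μy * τ)⁻¹) ∧
    -- (2) h_{xτ} = h_{-x}^τ
    (∀ μxt μnx : Equiv.Perm X, M.IsMuMap o ι (τ x) μxt →
      M.IsMuMap o ι (α⁻¹ o) μnx →
      μxt * τ = τ * (μnx * τ) * τ⁻¹) ∧
    -- (3) h_{x h_y} = h_{-y} h_{xτ}⁻¹ h_y
    (∀ μ μxt μny : Equiv.Perm X, M.IsMuMap o ι ((μy * τ) x) μ →
      M.IsMuMap o ι (τ x) μxt → M.IsMuMap o ι (αy⁻¹ o) μny →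
      μ * τ = (μy * τ) * (μxt * τ)⁻¹ * (μny * τ)) := by
  have hτG := hτ.mem_G
  have hhuaG : μy * τ ∈ M.G := mul_mem hμy.mem_G hτG
  have hhua_o : (μy * τ) o = o := by rw [Perm.mul_apply, hτ.1, hμy.2.1]
  have hhua_ι : (μy * τ) ι = ι := by rw [Perm.mul_apply, hτ.2.1, hμy.1]
  have mu_conj_swap_τ : ∀ {μ : Perm X}, M.IsMuMap o ι (α⁻¹ o) μ →
      M.IsMuMap o ι (τ x) (τ * μ * τ⁻¹) := fun hμ => by
    simpa only [inv_inv, hαo] using hμ.conj_of_swap h0 (inv_mem hαU) rfl hτG hτ.1 hτ.2.1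
  have mu_hua : ∀ μ, M.IsMuMap o ι ((μy * τ) x) μ →
      μ = (μy * τ) * μx * (μy * τ)⁻¹ :=
    fun μ hμ => hμ.unique h0 (hμx.conj_of_fix hhuaG hhua_o hhua_ι)
  refine ⟨mu_hua, fun μxt μnx hμxt hμnx => ?_, fun μ μxt μny hμ hμxt hμny => ?_⟩
  · rw [hμxt.unique h0 (mu_conj_swap_τ hμnx)]
    group
  · have hμny : μny = μy⁻¹ := hμny.unique h0 (hμy.inv h0 hαyU hαyo)
    have hμxt : μxt = τ * μx⁻¹ * τ⁻¹ :=
      hμxt.unique h0 (mu_conj_swap_τ (hμx.inv h0 hαU hαo))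
    rw [mu_hua μ hμ, hμny, hμxt]
    group

/-- identities for Hua maps `h_x = τ μ_x` (left convention: `μ_x * τ`,
i.e. first apply `τ`, then `μ_x`; and a right-convention conjugate `g^h = h⁻¹ g h`
becomes `h * g * h⁻¹`). -/
theorem stmt6 {X : Type*} (M : LocalMoufangSet X) (o ι : X) (h0 : ¬ M.r o ι)
    (e : X) (he : M.IsUnitPt o ι e)
    (τ : Equiv.Perm X) (hτ : M.IsMuMap o ι e τ)
    (x : X) (hx : M.IsUnitPt o ι x)
    (α : Equiv.Perm X) (hαU : α ∈ M.U ι) (hαo : α o = x)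
    (y : X) (hy : M.IsUnitPt o ι y)
    (αy : Equiv.Perm X) (hαyU : αy ∈ M.U ι) (hαyo : αy o = y)
    (μx μy : Equiv.Perm X)
    (hμx : M.IsMuMap o ι x μx) (hμy : M.IsMuMap o ι y μy) :
    -- (1) μ_{x h_y} = μ_x^{h_y}
    (∀ μ : Equiv.Perm X, M.IsMuMap o ι ((μy * τ) x) μ →
      μ = (μy * τ) * μx * (μy * τ)⁻¹) ∧
    -- (2) h_{xτ} = h_{-x}^τ
    (∀ μxt μnx : Equiv.Perm X, M.IsMuMap o ι (τ x) μxt →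
      M.IsMuMap o ι (α⁻¹ o) μnx →
      μxt * τ = τ * (μnx * τ) * τ⁻¹) ∧
    -- (3) h_{x h_y} = h_{-y} h_{xτ}⁻¹ h_y
    (∀ μ μxt μny : Equiv.Perm X, M.IsMuMap o ι ((μy * τ) x) μ →
      M.IsMuMap o ι (τ x) μxt → M.IsMuMap o ι (αy⁻¹ o) μny →
      μ * τ = (μy * τ) * (μxt * τ)⁻¹ * (μny * τ)) :=
  stmt6_general M o ι h0 e τ hτ x α hαU hαo y αy hαyU hαyo μx μy hμx hμy
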